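/- Let 0 < u, let f : ℝ → ℝ be convex on the open interval (−u, u), let 0 < v < u, let D = {(x, d) ∈ ℝ × ℝ : x ∈ [−v, v] and d ∈ ∂f(x)}, and let t : D → ℝ be defined by t(x, d) = x + d. Then t is a bijection from D onto the closed interval [−v + sInf(∂f(−v)), v + sSup(∂f(v))], and t is bi-Lipschitzian with constant 2 for the Euclidean distance: for all p, q ∈ D, dist(p, q) ≤ |t(p) − t(q)| ≤ 2·dist(p, q). -/
import Mathlib

open Set

/-- The subdifferential of `f` at `x₀`, relative to the open interval `(-u, u)`. -/
def subdiff (u : ℝ) (f : ℝ → ℝ) (x₀ : ℝ) : Set ℝ :=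
  {d : ℝ | ∀ x ∈ Set.Ioo (-u) u, f x₀ + d * (x - x₀) ≤ f x}

/-- The Euclidean distance on `ℝ × ℝ`. -/
noncomputable def edist2 (p q : ℝ × ℝ) : ℝ :=
  Real.sqrt ((p.1 - q.1) ^ 2 + (p.2 - q.2) ^ 2)

namespace SubdiffAux

variable {u : ℝ} {f : ℝ → ℝ}

lemma slope_le_of_mem {x₀ d y : ℝ} (hd : d ∈ subdiff u f x₀) (hy : y ∈ Ioo (-u) u)
    (hyx : y < x₀) : (f x₀ - f y) / (x₀ - y) ≤ d := by
  have h := hd y hy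
  rw [div_le_iff₀ (by linarith)]
  nlinarith

lemma le_slope_of_mem {x₀ d z : ℝ} (hd : d ∈ subdiff u f x₀) (hz : z ∈ Ioo (-u) u)
    (hxz : x₀ < z) : d ≤ (f z - f x₀) / (z - x₀) := by
  have h := hd z hz
  rw [le_div_iff₀ (by linarith)]
  nlinarith

lemma mem_of_slopes {x₀ d : ℝ}
    (hl : ∀ y ∈ Ioo (-u) u, y < x₀ → (f x₀ - f y) / (x₀ - y) ≤ d)
    (hr : ∀ z ∈ Ioo (-u) u, x₀ < z → d ≤ (f z - f x₀) / (z - x₀)) :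
    d ∈ subdiff u f x₀ := by
  intro x hx
  rcases lt_trichotomy x x₀ with h | h | h
  · have := hl x hx h
    rw [div_le_iff₀ (by linarith)] at this
    nlinarith
  · subst h; simp
  · have := hr x hx h
    rw [le_div_iff₀ (by linarith)] at this
    nlinarith

noncomputable def dm (u : ℝ) (f : ℝ → ℝ) (x₀ : ℝ) : ℝ :=
  sSup ((fun y => (f x₀ - f y) / (x₀ - y)) '' Ioo (-u) x₀)

noncomputable def dp (u : ℝ) (f : ℝ → ℝ) (x₀ : ℝ) : ℝ :=
  sInf ((fun z => (f z - f x₀) / (z - x₀)) '' Ioo x₀ u)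

lemma leftSlopes_nonempty {x₀ : ℝ} (hx₀ : x₀ ∈ Ioo (-u) u) :
    ((fun y => (f x₀ - f y) / (x₀ - y)) '' Ioo (-u) x₀).Nonempty :=
  (nonempty_Ioo.2 hx₀.1).image _

lemma rightSlopes_nonempty {x₀ : ℝ} (hx₀ : x₀ ∈ Ioo (-u) u) :
    ((fun z => (f z - f x₀) / (z - x₀)) '' Ioo x₀ u).Nonempty :=
  (nonempty_Ioo.2 hx₀.2).image _

lemma leftSlopes_bddAbove (hf : ConvexOn ℝ (Ioo (-u) u) f) {x₀ : ℝ} (hx₀ : x₀ ∈ Ioo (-u) u) :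
    BddAbove ((fun y => (f x₀ - f y) / (x₀ - y)) '' Ioo (-u) x₀) := by
  refine ⟨(f ((x₀ + u) / 2) - f x₀) / ((x₀ + u) / 2 - x₀), ?_⟩
  rintro r ⟨y, hy, rfl⟩
  have hz : (x₀ + u) / 2 ∈ Ioo (-u) u := ⟨by nlinarith [hx₀.1, hx₀.2], by nlinarith [hx₀.2]⟩
  exact hf.slope_mono_adjacent ⟨hy.1, hy.2.trans hx₀.2⟩ hz hy.2 (by nlinarith [hx₀.2])

lemma rightSlopes_bddBelow (hf : ConvexOn ℝ (Ioo (-u) u) f) {x₀ : ℝ} (hx₀ : x₀ ∈ Ioo (-u) u) :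
    BddBelow ((fun z => (f z - f x₀) / (z - x₀)) '' Ioo x₀ u) := by
  refine ⟨(f x₀ - f ((x₀ - u) / 2)) / (x₀ - (x₀ - u) / 2), ?_⟩
  rintro r ⟨z, hz, rfl⟩
  have hy : (x₀ - u) / 2 ∈ Ioo (-u) u := ⟨by nlinarith [hx₀.1], by nlinarith [hx₀.1, hx₀.2]⟩
  exact hf.slope_mono_adjacent hy ⟨lt_trans hx₀.1 hz.1, hz.2⟩ (by nlinarith [hx₀.1]) hz.1

lemma dm_mem (hf : ConvexOn ℝ (Ioo (-u) u) f) {x₀ : ℝ} (hx₀ : x₀ ∈ Ioo (-u) u) :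
    dm u f x₀ ∈ subdiff u f x₀ := by
  apply mem_of_slopes
  · intro y hy hyx
    exact le_csSup (leftSlopes_bddAbove hf hx₀) ⟨y, ⟨hy.1, hyx⟩, rfl⟩
  · intro z hz hxz
    apply csSup_le (leftSlopes_nonempty hx₀)
    rintro r ⟨y, hy, rfl⟩
    exact hf.slope_mono_adjacent ⟨hy.1, hy.2.trans hx₀.2⟩ hz hy.2 hxz

lemma dp_mem (hf : ConvexOn ℝ (Ioo (-u) u) f) {x₀ : ℝ} (hx₀ : x₀ ∈ Ioo (-u) u) :
    dp u f x₀ ∈ subdiff u f x₀ := by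
  apply mem_of_slopes
  · intro y hy hyx
    apply le_csInf (rightSlopes_nonempty hx₀)
    rintro r ⟨z, hz, rfl⟩
    exact hf.slope_mono_adjacent hy ⟨lt_trans hx₀.1 hz.1, hz.2⟩ hyx hz.1
  · intro z hz hxz
    exact csInf_le (rightSlopes_bddBelow hf hx₀) ⟨z, ⟨hxz, hz.2⟩, rfl⟩

lemma subdiff_bddBelow {x₀ : ℝ} (hx₀ : x₀ ∈ Ioo (-u) u) :
    BddBelow (subdiff u f x₀) := by
  refine ⟨(f x₀ - f ((x₀ - u) / 2)) / (x₀ - (x₀ - u) / 2), fun d hd => ?_⟩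
  exact slope_le_of_mem hd ⟨by nlinarith [hx₀.1], by nlinarith [hx₀.1, hx₀.2]⟩
    (by nlinarith [hx₀.1])

lemma subdiff_bddAbove {x₀ : ℝ} (hx₀ : x₀ ∈ Ioo (-u) u) :
    BddAbove (subdiff u f x₀) := by
  refine ⟨(f ((x₀ + u) / 2) - f x₀) / ((x₀ + u) / 2 - x₀), fun d hd => ?_⟩
  exact le_slope_of_mem hd ⟨by nlinarith [hx₀.1, hx₀.2], by nlinarith [hx₀.2]⟩
    (by nlinarith [hx₀.2])

lemma subdiff_isClosed (u : ℝ) (f : ℝ → ℝ) (x₀ : ℝ) : IsClosed (subdiff u f x₀) := by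
  have : subdiff u f x₀ = ⋂ x ∈ Ioo (-u) u, {d : ℝ | f x₀ + d * (x - x₀) ≤ f x} := by
    ext d; simp [subdiff]
  rw [this]
  exact isClosed_biInter fun x _ => isClosed_le (by continuity) continuous_const

lemma subdiff_between {x₀ d₁ d₂ d : ℝ} (h₁ : d₁ ∈ subdiff u f x₀) (h₂ : d₂ ∈ subdiff u f x₀)
    (hl : d₁ ≤ d) (hr : d ≤ d₂) : d ∈ subdiff u f x₀ := by
  intro x hx
  rcases le_total x x₀ with h | h
  · nlinarith [h₁ x hx]
  · nlinarith [h₂ x hx]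

lemma subdiff_monotone {x₁ x₂ d₁ d₂ : ℝ} (h₁ : d₁ ∈ subdiff u f x₁) (h₂ : d₂ ∈ subdiff u f x₂)
    (hx₁ : x₁ ∈ Ioo (-u) u) (hx₂ : x₂ ∈ Ioo (-u) u) : 0 ≤ (d₁ - d₂) * (x₁ - x₂) := by
  nlinarith [h₁ x₂ hx₂, h₂ x₁ hx₁]

end SubdiffAux

set_option maxHeartbeats 1000000 in
open SubdiffAux in
/-- The map `t(x, d) = x + d` is a bijection from
`D = {(x, d) : x ∈ [-v, v], d ∈ ∂f(x)}` onto the closed interval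
`[-v + inf ∂f(-v), v + sup ∂f(v)]`, and it is bi-Lipschitzian with constant `2`
for the Euclidean distance. -/
theorem subdiff_sum_bijOn_and_biLipschitz (u : ℝ) (hu : 0 < u) (f : ℝ → ℝ)
    (hf : ConvexOn ℝ (Set.Ioo (-u) u) f)
    (v : ℝ) (hv : 0 < v) (hvu : v < u)
    (D : Set (ℝ × ℝ)) (hD : D = {p : ℝ × ℝ | p.1 ∈ Set.Icc (-v) v ∧ p.2 ∈ subdiff u f p.1}) :
    Set.BijOn (fun p : ℝ × ℝ => p.1 + p.2) D
        (Set.Icc (-v + sInf (subdiff u f (-v))) (v + sSup (subdiff u f v))) ∧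
      ∀ p ∈ D, ∀ q ∈ D,
        edist2 p q ≤ |(p.1 + p.2) - (q.1 + q.2)| ∧
        |(p.1 + p.2) - (q.1 + q.2)| ≤ 2 * edist2 p q := by
  subst hD
  have hsub : Icc (-v) v ⊆ Ioo (-u) u := fun x hx => ⟨by linarith [hx.1], by linarith [hx.2]⟩
  have hnv : -v ∈ Ioo (-u) u := ⟨by linarith, by linarith⟩
  have hvm : v ∈ Ioo (-u) u := ⟨by linarith, by linarith⟩
  -- monotonicity of the subdifferential on D
  have hmono : ∀ p ∈ {p : ℝ × ℝ | p.1 ∈ Set.Icc (-v) v ∧ p.2 ∈ subdiff u f p.1},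
      ∀ q ∈ {p : ℝ × ℝ | p.1 ∈ Set.Icc (-v) v ∧ p.2 ∈ subdiff u f p.1},
      0 ≤ (p.1 - q.1) * (p.2 - q.2) := by
    intro p hp q hq
    nlinarith [subdiff_monotone hp.2 hq.2 (hsub hp.1) (hsub hq.1)]
  -- the bi-Lipschitz estimates
  have key : ∀ p ∈ {p : ℝ × ℝ | p.1 ∈ Set.Icc (-v) v ∧ p.2 ∈ subdiff u f p.1},
      ∀ q ∈ {p : ℝ × ℝ | p.1 ∈ Set.Icc (-v) v ∧ p.2 ∈ subdiff u f p.1},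
      edist2 p q ≤ |(p.1 + p.2) - (q.1 + q.2)| ∧
      |(p.1 + p.2) - (q.1 + q.2)| ≤ 2 * edist2 p q := by
    intro p hp q hq
    have hab : 0 ≤ (p.1 - q.1) * (p.2 - q.2) := hmono p hp q hq
    set a := p.1 - q.1 with ha
    set b := p.2 - q.2 with hb
    have hsum : (p.1 + p.2) - (q.1 + q.2) = a + b := by rw [ha, hb]; ring
    have hed : edist2 p q = Real.sqrt (a ^ 2 + b ^ 2) := rfl
    rw [hsum, hed]
    constructor
    · rw [← Real.sqrt_sq_eq_abs]
      exact Real.sqrt_le_sqrt (by nlinarith)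
    · rw [← Real.sqrt_sq_eq_abs]
      calc Real.sqrt ((a + b) ^ 2) ≤ Real.sqrt (2 ^ 2 * (a ^ 2 + b ^ 2)) :=
            Real.sqrt_le_sqrt (by nlinarith [sq_nonneg (a - b)])
        _ = 2 * Real.sqrt (a ^ 2 + b ^ 2) := by
            rw [Real.sqrt_mul (by positivity), Real.sqrt_sq (by norm_num)]
  refine ⟨⟨?_, ?_, ?_⟩, key⟩
  · -- MapsTo
    rintro ⟨x, d⟩ ⟨hx, hd⟩
    have hxIoo := hsub hx
    simp only [mem_Icc]
    constructor
    · have hdm := dm_mem hf hnv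
      have hmon := subdiff_monotone hd hdm hxIoo hnv
      have hInf_dm : sInf (subdiff u f (-v)) ≤ dm u f (-v) :=
        csInf_le (subdiff_bddBelow hnv) hdm
      rcases eq_or_lt_of_le hx.1 with he | hlt
      · have hd' : d ∈ subdiff u f (-v) := by rw [← he] at hd; exact hd
        have : sInf (subdiff u f (-v)) ≤ d := csInf_le (subdiff_bddBelow hnv) hd'
        show -v + sInf (subdiff u f (-v)) ≤ x + d
        linarith [he.le, he.ge]
      · show -v + sInf (subdiff u f (-v)) ≤ x + d
        nlinarith [hmon, hInf_dm, hlt]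
    · have hdp := dp_mem hf hvm
      have hmon := subdiff_monotone hd hdp hxIoo hvm
      have hdp_sup : dp u f v ≤ sSup (subdiff u f v) :=
        le_csSup (subdiff_bddAbove hvm) hdp
      rcases eq_or_lt_of_le hx.2 with he | hlt
      · have hd' : d ∈ subdiff u f v := by rw [he] at hd; exact hd
        have : d ≤ sSup (subdiff u f v) := le_csSup (subdiff_bddAbove hvm) hd'
        show x + d ≤ v + sSup (subdiff u f v)
        linarith [he.le, he.ge]
      · show x + d ≤ v + sSup (subdiff u f v)
        nlinarith [hmon, hdp_sup, hlt]
  · -- InjOn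
    intro p hp q hq hpq
    have hpq' : p.1 + p.2 = q.1 + q.2 := hpq
    have h1 := (key p hp q hq).1
    rw [hpq', sub_self, abs_zero] at h1
    have h2 : edist2 p q = 0 :=
      le_antisymm h1 (Real.sqrt_nonneg _)
    have h2' : Real.sqrt ((p.1 - q.1) ^ 2 + (p.2 - q.2) ^ 2) = 0 := h2
    have h3 : (p.1 - q.1) ^ 2 + (p.2 - q.2) ^ 2 ≤ 0 := Real.sqrt_eq_zero'.mp h2'
    have e1 : p.1 = q.1 := by nlinarith [sq_nonneg (p.1 - q.1), sq_nonneg (p.2 - q.2)]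
    have e2 : p.2 = q.2 := by nlinarith [sq_nonneg (p.1 - q.1), sq_nonneg (p.2 - q.2)]
    exact Prod.ext e1 e2
  · -- SurjOn
    intro s hs
    simp only [mem_Icc] at hs
    set h : ℝ → ℝ := fun x => f x + x ^ 2 / 2 - s * x with hh
    have hfc : ContinuousOn f (Icc (-v) v) := (hf.continuousOn isOpen_Ioo).mono hsub
    have hhc : ContinuousOn h (Icc (-v) v) := by
      apply ContinuousOn.sub
      · exact hfc.add (Continuous.continuousOn (by continuity))
      · exact (continuous_const.mul continuous_id).continuousOn
    obtain ⟨x₀, hx₀I, hmin'⟩ := isCompact_Icc.exists_isMinOn (nonempty_Icc.2 (by linarith)) hhc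
    have hmin : ∀ x ∈ Icc (-v) v, h x₀ ≤ h x := fun x hx => hmin' hx
    rcases eq_or_lt_of_le hx₀I.1 with hnveq | hnvlt
    · -- x₀ = -v
      have hx₀ : x₀ = -v := hnveq.symm
      subst hx₀
      refine ⟨(-v, s + v), ⟨?_, ?_⟩, by show -v + (s + v) = s; ring⟩
      · show (-v : ℝ) ∈ Icc (-v) v
        exact ⟨le_refl _, by linarith⟩
      show s + v ∈ subdiff u f (-v)
      have hInf_mem : sInf (subdiff u f (-v)) ∈ subdiff u f (-v) :=
        (subdiff_isClosed u f (-v)).csInf_mem ⟨_, dm_mem hf hnv⟩ (subdiff_bddBelow hnv)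
      refine subdiff_between hInf_mem (dp_mem hf hnv) (by linarith [hs.1]) ?_
      apply le_csInf (rightSlopes_nonempty hnv)
      rintro r ⟨z, hz, rfl⟩
      by_contra hcon
      push_neg at hcon
      set c := (s + v) - (f z - f (-v)) / (z - -v) with hc
      have hc0 : 0 < c := by rw [hc]; linarith
      set m := min z v with hm
      have hmgt : -v < m := lt_min hz.1 (by linarith)
      set x' := -v + min c (m + v) / 2 with hx'
      have hq0 : 0 < min c (m + v) := lt_min hc0 (by linarith)
      have hqc : min c (m + v) ≤ c := min_le_left _ _
      have hqm : min c (m + v) ≤ m + v := min_le_right _ _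
      have hmv : m ≤ v := min_le_right _ _
      have hmz : m ≤ z := min_le_left _ _
      clear_value c m x'
      have hx'gt : -v < x' := by rw [hx']; linarith
      have hx'm : x' < m := by rw [hx']; linarith
      have hx'I : x' ∈ Icc (-v) v := ⟨hx'gt.le, (hx'm.trans_le hmv).le⟩
      have hx'z : x' < z := hx'm.trans_le hmz
      -- slope(-v, x') ≤ slope(-v, z)
      have hsl : (f x' - f (-v)) / (x' - -v) ≤ (f z - f (-v)) / (z - -v) := by
        have := hf.secant_mono (a := -v) hnv (hsub hx'I) ⟨lt_trans hnv.1 hz.1, hz.2⟩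
          (ne_of_gt hx'gt) (ne_of_gt (lt_trans hx'gt hx'z)) hx'z.le
        exact this
      -- minimality at x'
      have hm2 := hmin x' hx'I
      simp only [hh] at hm2
      have hsl2 : s - (x' - v) / 2 ≤ (f x' - f (-v)) / (x' - -v) := by
        rw [le_div_iff₀ (by linarith)]
        nlinarith
      have hxq : x' + v ≤ c / 2 := by rw [hx']; linarith
      have : (f z - f (-v)) / (z - -v) = s + v - c := by rw [hc]; ring
      linarith
    rcases eq_or_lt_of_le hx₀I.2 with hveq | hvlt
    · -- x₀ = v
      subst hveq
      refine ⟨(x₀, s - x₀), ⟨?_, ?_⟩, by show x₀ + (s - x₀) = s; ring⟩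
      · show x₀ ∈ Icc (-x₀) x₀
        exact ⟨by linarith, le_refl _⟩
      show s - x₀ ∈ subdiff u f x₀
      have hSup_mem : sSup (subdiff u f x₀) ∈ subdiff u f x₀ :=
        (subdiff_isClosed u f x₀).csSup_mem ⟨_, dm_mem hf hvm⟩ (subdiff_bddAbove hvm)
      refine subdiff_between (dm_mem hf hvm) hSup_mem ?_ (by linarith [hs.2])
      apply csSup_le (leftSlopes_nonempty hvm)
      rintro r ⟨y, hy, rfl⟩
      by_contra hcon
      push_neg at hcon
      set c := (f x₀ - f y) / (x₀ - y) - (s - x₀) with hc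
      have hc0 : 0 < c := by rw [hc]; linarith
      set m := max y (-x₀) with hm
      have hmlt : m < x₀ := max_lt hy.2 (by linarith)
      set x' := x₀ - min c (x₀ - m) / 2 with hx'
      have hq0 : 0 < min c (x₀ - m) := lt_min hc0 (by linarith)
      have hqc : min c (x₀ - m) ≤ c := min_le_left _ _
      have hqm : min c (x₀ - m) ≤ x₀ - m := min_le_right _ _
      have hym : y ≤ m := le_max_left _ _
      have hnxm : -x₀ ≤ m := le_max_right _ _
      clear_value c m x'
      have hx'lt : x' < x₀ := by rw [hx']; linarith
      have hx'm : m < x' := by rw [hx']; linarith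
      have hx'I : x' ∈ Icc (-x₀) x₀ := ⟨(hnxm.trans_lt hx'm).le, hx'lt.le⟩
      have hyx' : y < x' := hym.trans_lt hx'm
      have hsl : (f x₀ - f y) / (x₀ - y) ≤ (f x₀ - f x') / (x₀ - x') := by
        have h1 := hf.secant_mono (a := x₀) hvm ⟨hy.1, hy.2.trans hvm.2⟩ (hsub hx'I)
          (ne_of_lt hy.2) (ne_of_lt hx'lt) hyx'.le
        have e1 : (f y - f x₀) / (y - x₀) = (f x₀ - f y) / (x₀ - y) := by
          rw [div_eq_div_iff (by linarith) (by linarith)]; ring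
        have e2 : (f x' - f x₀) / (x' - x₀) = (f x₀ - f x') / (x₀ - x') := by
          rw [div_eq_div_iff (by linarith) (by linarith)]; ring
        rw [e1, e2] at h1
        exact h1
      have hm2 := hmin x' hx'I
      simp only [hh] at hm2
      have hsl2 : (f x₀ - f x') / (x₀ - x') ≤ s - (x₀ + x') / 2 := by
        rw [div_le_iff₀ (by linarith)]
        nlinarith
      have hxq : x₀ - x' ≤ c / 2 := by rw [hx']; linarith
      linarith
    · -- interior
      refine ⟨(x₀, s - x₀), ⟨?_, ?_⟩, by show x₀ + (s - x₀) = s; ring⟩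
      · show x₀ ∈ Icc (-v) v
        exact hx₀I
      show s - x₀ ∈ subdiff u f x₀
      intro y hy
      by_contra hcon
      push_neg at hcon
      have hyne : y ≠ x₀ := by
        rintro rfl
        simp at hcon
      set ε := f x₀ + (s - x₀) * (y - x₀) - f y with hε
      have hε0 : 0 < ε := by rw [hε]; linarith
      have habs : 0 < |y - x₀| := abs_pos.2 (sub_ne_zero.2 hyne)
      have hyx0 : y - x₀ ≠ 0 := sub_ne_zero.2 hyne
      have hyx2 : 0 < (y - x₀) ^ 2 := by positivity
      set δ := min (v - x₀) (x₀ + v) with hδ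
      have hδ0 : 0 < δ := lt_min (by linarith) (by linarith)
      set t := min 1 (min (δ / |y - x₀|) (ε / (y - x₀) ^ 2)) with ht
      have ht0 : 0 < t := lt_min one_pos (lt_min (div_pos hδ0 habs) (div_pos hε0 hyx2))
      have ht1 : t ≤ 1 := min_le_left _ _
      have htδ : t * |y - x₀| ≤ δ := by
        have h1 : t ≤ δ / |y - x₀| := le_trans (min_le_right _ _) (min_le_left _ _)
        rw [le_div_iff₀ habs] at h1
        exact h1
      have htε : t * (y - x₀) ^ 2 ≤ ε := by
        have h1 : t ≤ ε / (y - x₀) ^ 2 := le_trans (min_le_right _ _) (min_le_right _ _)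
        rw [le_div_iff₀ hyx2] at h1
        exact h1
      have habs2 : |t * (y - x₀)| ≤ δ := by rw [abs_mul, abs_of_pos ht0]; exact htδ
      have hzd := abs_le.1 habs2
      have hδ1 : δ ≤ v - x₀ := min_le_left _ _
      have hδ2 : δ ≤ x₀ + v := min_le_right _ _
      clear_value ε δ t
      have hzI : x₀ + t * (y - x₀) ∈ Icc (-v) v := ⟨by linarith [hzd.1], by linarith [hzd.2]⟩
      have hcx := hf.2 (hsub hx₀I) hy (by linarith : (0:ℝ) ≤ 1 - t) ht0.le
        (by ring : (1 - t) + t = 1)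
      simp only [smul_eq_mul] at hcx
      have hze : (1 - t) * x₀ + t * y = x₀ + t * (y - x₀) := by ring
      rw [hze] at hcx
      have hm2 := hmin _ hzI
      simp only [hh] at hm2
      have hεt : t * ε = t * (f x₀ + (s - x₀) * (y - x₀) - f y) := by rw [hε]
      nlinarith [mul_le_mul_of_nonneg_left htε ht0.le, mul_pos ht0 hε0, hεt, hm2, hcx]
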